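/- In the torus example X = 𝕋 ∪ H, for every point y₀ ∈ 𝕋 the orbit of y₀ under the group of surjective isometries of (X, d) is dense in 𝕋 but not closed in X; moreover, H is a single orbit of the isometry group. -/

import Mathlib

/-- The distance of the Z-construction on the disjoint union `Y ⊕ (Y × ℝ)`. -/
noncomputable def zdist {Y : Type*} [MetricSpace Y] (R M : ℝ) :
    Y ⊕ Y × ℝ → Y ⊕ Y × ℝ → ℝ
  | Sum.inl y₁, Sum.inl y₂ => dist y₁ y₂
  | Sum.inl y₁, Sum.inr q => dist y₁ q.1 + R
  | Sum.inr p, Sum.inl y₂ => dist p.1 y₂ + R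
  | Sum.inr p, Sum.inr q => dist p.1 q.1 + min |p.2 - q.2| M

/-- The 2-torus `𝕋 = AddCircle 1 × AddCircle 1` with the product (max) metric. -/
abbrev T2 : Type := AddCircle (1 : ℝ) × AddCircle (1 : ℝ)

/-- The dense one-parameter subgroup `g(t) = (t mod 1, αt mod 1)` of the torus. -/
noncomputable def torusFlow (α : ℝ) (t : ℝ) : T2 :=
  ((t : AddCircle (1 : ℝ)), ((α * t : ℝ) : AddCircle (1 : ℝ)))

/-- The space `X = 𝕋 ∪ H` where `H = {(g(t), t) : t ∈ ℝ}`, as a subset of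
`Z = 𝕋 ⊕ (𝕋 × ℝ)`. -/
def torusX (α : ℝ) : Set (T2 ⊕ T2 × ℝ) :=
  {z | ∃ y : T2, z = Sum.inl y} ∪ {z | ∃ t : ℝ, z = Sum.inr (torusFlow α t, t)}

theorem memT (α : ℝ) (y : T2) : (Sum.inl y : T2 ⊕ T2 × ℝ) ∈ torusX α :=
  Or.inl ⟨y, rfl⟩

theorem memH (α : ℝ) (t : ℝ) :
    (Sum.inr (torusFlow α t, t) : T2 ⊕ T2 × ℝ) ∈ torusX α :=
  Or.inr ⟨t, rfl⟩

/-- The orbit of a point `x` of `X = 𝕋 ∪ H` under the group of surjective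
isometries of `(X, d)`. -/
def isomOrbit (α R M : ℝ) (x : torusX α) : Set (torusX α) :=
  {z | ∃ φ : torusX α → torusX α,
    Function.Surjective φ ∧
    (∀ p q : torusX α, zdist R M (φ p).1 (φ q).1 = zdist R M p.1 q.1) ∧
    φ x = z}

/-!
Translating by `(g s, s)` is an isometry of `X`: these maps act transitively on `H` and move
`y₀` along the dense curve `y₀ + g(ℝ)`. Conversely, at a small scale every point of `𝕋` is the
apex of an equilateral triangle and no point of `H` is, so a surjective isometry `φ` preserves
`𝕋` and `H`. On `H` it induces `σ : ℝ → ℝ` preserving `min |t - s| M`, hence `σ t = c ± t`, and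
by density of `g(ℝ)` this forces `φ y = g c ± y` on `𝕋`. Thus the orbit of `y₀` lies in
`(y₀ + g(ℝ)) ∪ (g(ℝ) - y₀)`; as `g(ℝ)` contains neither `(0, 1/4)` nor `(0, 1/2)`, one of
`y₀ + (0, 1/4)`, `y₀ + (0, 1/2)` lies outside it, yet in the closure of the orbit.
-/

open Set Function

lemma eq_add_of_monotone_of_abs_sub_eq {σ : ℝ → ℝ} {M : ℝ} (hM : 0 < M) (hmono : Monotone σ)
    (hloc : ∀ t s, |t - s| < M → |σ t - σ s| = |t - s|) (t : ℝ) : σ t = σ 0 + t := by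
  have hconst : IsLocallyConstant fun t => σ t - t := by
    refine (IsLocallyConstant.iff_eventually_eq _).2 fun t => ?_
    filter_upwards [Metric.ball_mem_nhds t hM] with u hu
    have h := hloc u t (by rwa [Metric.mem_ball, Real.dist_eq] at hu)
    rcases le_total t u with htu | hut
    · rw [abs_of_nonneg (sub_nonneg.2 (hmono htu)), abs_of_nonneg (sub_nonneg.2 htu)] at h
      linarith
    · rw [abs_of_nonpos (sub_nonpos.2 (hmono hut)), abs_of_nonpos (sub_nonpos.2 hut)] at h
      linarith
  have := hconst.apply_eq_of_preconnectedSpace t 0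
  simp only [sub_zero] at this
  linarith

lemma exists_eq_add_or_eq_sub_of_min_abs_sub_eq {σ : ℝ → ℝ} {M : ℝ} (hM : 0 < M)
    (h : ∀ t s, min |σ t - σ s| M = min |t - s| M) :
    ∃ c, (∀ t, σ t = c + t) ∨ ∀ t, σ t = c - t := by
  have hloc : ∀ t s, |t - s| < M → |σ t - σ s| = |t - s| := by
    intro t s hts
    have hts' := h t s
    rw [min_eq_left hts.le] at hts'
    rcases min_choice |σ t - σ s| M with hmin | hmin <;> rw [hmin] at hts'
    · exact hts'
    · exact absurd hts' hts.ne'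
  have hinj : Injective σ := by
    intro t s hts
    have hts' := h t s
    rw [hts, sub_self, abs_zero, min_eq_left hM.le] at hts'
    rcases min_choice |t - s| M with hmin | hmin <;> rw [hmin] at hts'
    · exact sub_eq_zero.1 (abs_eq_zero.1 hts'.symm)
    · exact absurd hts' hM.ne
  have hcont : Continuous σ := by
    refine Metric.continuous_iff.2 fun s ε hε => ⟨min ε M, lt_min hε hM, fun t hts => ?_⟩
    rw [Real.dist_eq] at hts ⊢
    rw [hloc t s (hts.trans_le (min_le_right _ _))]
    exact hts.trans_le (min_le_left _ _)
  rcases hcont.strictMono_of_inj hinj with hmono | hanti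
  · exact ⟨σ 0, Or.inl (eq_add_of_monotone_of_abs_sub_eq hM hmono.monotone hloc)⟩
  · refine ⟨σ 0, Or.inr fun t => ?_⟩
    have := eq_add_of_monotone_of_abs_sub_eq (σ := fun t => -σ t) hM
      (fun a b hab => neg_le_neg (hanti.antitone hab))
      (fun t s hts => by rw [neg_sub_neg, abs_sub_comm]; exact hloc t s hts) t
    linarith

lemma AddCircle.norm_coe_one_of_abs_le {x : ℝ} (h : |x| ≤ 1 / 2) :
    ‖(x : AddCircle (1 : ℝ))‖ = |x| :=
  (AddCircle.norm_coe_eq_abs_iff _ one_ne_zero).2 (by simpa using h)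

@[simp]
lemma torusFlow_add (α s t : ℝ) : torusFlow α (s + t) = torusFlow α s + torusFlow α t := by
  simp [torusFlow, mul_add]

noncomputable def torusFlowHom (α : ℝ) : ℝ →+ T2 := AddMonoidHom.mk' (torusFlow α) (torusFlow_add α)

@[simp]
lemma torusFlow_sub (α s t : ℝ) : torusFlow α (s - t) = torusFlow α s - torusFlow α t := by
  simp [torusFlow, mul_sub]

@[simp]
lemma torusFlow_zero (α : ℝ) : torusFlow α 0 = 0 := by
  simp [torusFlow]

lemma denseRange_torusFlow {α : ℝ} (hα : Irrational α) : DenseRange (torusFlow α) := by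
  have hdense : DenseRange (· • (α : AddCircle (1 : ℝ)) : ℤ → AddCircle (1 : ℝ)) :=
    AddCircle.denseRange_zsmul_coe_iff.2 (by simpa using hα)
  refine Metric.denseRange_iff.2 fun y r hr => ?_
  obtain ⟨a, ha⟩ := QuotientAddGroup.mk_surjective y.1
  obtain ⟨n, hn⟩ := Metric.denseRange_iff.1 hdense (y.2 - (α * a : ℝ)) r hr
  refine ⟨a + n, ?_⟩
  have h₁ : ((a + n : ℝ) : AddCircle (1 : ℝ)) = y.1 := by
    rw [AddCircle.coe_add, ← ha, add_eq_left, AddCircle.coe_eq_zero_iff]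
    exact ⟨n, by simp⟩
  have h₂ : ((α * (a + n) : ℝ) : AddCircle (1 : ℝ)) =
      (α * a : ℝ) + n • (α : AddCircle (1 : ℝ)) := by
    rw [mul_add, AddCircle.coe_add, ← AddCircle.coe_zsmul, zsmul_eq_mul, mul_comm (n : ℝ)]
  rw [Prod.dist_eq, torusFlow, h₁, h₂, dist_self, max_eq_right dist_nonneg]
  calc dist y.2 ((α * a : ℝ) + n • (α : AddCircle (1 : ℝ)))
      = dist (y.2 - (α * a : ℝ)) (n • (α : AddCircle (1 : ℝ))) := by
        rw [dist_eq_norm, dist_eq_norm]; congr 1; abel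
    _ < r := hn

lemma dist_torusFlow_of_small (α : ℝ) {t u : ℝ} (h : |t - u| * max 1 |α| ≤ 1 / 2) :
    dist (torusFlow α t) (torusFlow α u) = |t - u| * max 1 |α| := by
  have hα : |α| * |t - u| ≤ 1 / 2 := by nlinarith [le_max_right 1 |α|, abs_nonneg (t - u)]
  have h1 : |t - u| ≤ 1 / 2 := by nlinarith [le_max_left 1 |α|, abs_nonneg (t - u)]
  rw [dist_eq_norm, ← torusFlow_sub, torusFlow, Prod.norm_def,
    AddCircle.norm_coe_one_of_abs_le h1,
    AddCircle.norm_coe_one_of_abs_le (by rwa [abs_mul]), abs_mul,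
    mul_max_of_nonneg _ _ (abs_nonneg _)]
  ring_nf

def HasEquilateralTriangle {X : Type*} (d : X → X → ℝ) (ε : ℝ) (x : X) : Prop :=
  ∃ b c, d x b = ε ∧ d x c = ε ∧ d b c = ε

namespace HasEquilateralTriangle

variable {X Y : Type*} {d : X → X → ℝ} {d' : Y → Y → ℝ} {f : X → Y} {ε : ℝ} {x : X}

lemma map (hf : ∀ a b, d' (f a) (f b) = d a b) (h : HasEquilateralTriangle d ε x) :
    HasEquilateralTriangle d' ε (f x) := by
  obtain ⟨b, c, hb, hc, hbc⟩ := h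
  exact ⟨f b, f c, by rwa [hf], by rwa [hf], by rwa [hf]⟩

lemma of_map (hsurj : Surjective f) (hf : ∀ a b, d' (f a) (f b) = d a b)
    (h : HasEquilateralTriangle d' ε (f x)) : HasEquilateralTriangle d ε x := by
  obtain ⟨b, c, hb, hc, hbc⟩ := h
  obtain ⟨b, rfl⟩ := hsurj b
  obtain ⟨c, rfl⟩ := hsurj c
  exact ⟨b, c, by rwa [← hf], by rwa [← hf], by rwa [← hf]⟩

end HasEquilateralTriangle

lemma Real.eq_zero_of_hasEquilateralTriangle {r x : ℝ} (h : HasEquilateralTriangle dist r x) :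
    r = 0 := by
  obtain ⟨b, c, hb, hc, hbc⟩ := h
  simp only [Real.dist_eq] at hb hc hbc
  rcases abs_cases (x - b) with ⟨h₁, -⟩ | ⟨h₁, -⟩ <;>
    rcases abs_cases (x - c) with ⟨h₂, -⟩ | ⟨h₂, -⟩ <;>
    rcases abs_cases (b - c) with ⟨h₃, -⟩ | ⟨h₃, -⟩ <;> linarith

lemma hasEquilateralTriangle_torus (y : T2) {ε : ℝ} (hε₀ : 0 ≤ ε) (hε : ε ≤ 1 / 2) :
    HasEquilateralTriangle dist ε y := by
  have hnorm : ‖(ε : AddCircle (1 : ℝ))‖ = ε := by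
    rw [AddCircle.norm_coe_one_of_abs_le (by rwa [abs_of_nonneg hε₀]), abs_of_nonneg hε₀]
  refine ⟨y + ((ε : AddCircle (1 : ℝ)), 0), y + (0, (ε : AddCircle (1 : ℝ))), ?_, ?_, ?_⟩ <;>
    simp [dist_add_left, Prod.dist_eq, hnorm, hε₀]

section TorusX

variable {α : ℝ}

def torusPt (α : ℝ) (y : T2) : torusX α := ⟨Sum.inl y, memT α y⟩

noncomputable def flowPt (α t : ℝ) : torusX α := ⟨Sum.inr (torusFlow α t, t), memH α t⟩

lemma torusPt_injective : Injective (torusPt α) :=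
  fun _ _ h => Sum.inl_injective (congrArg Subtype.val h)

lemma torusPt_ne_flowPt (y : T2) (t : ℝ) : torusPt α y ≠ flowPt α t :=
  fun h => Sum.inl_ne_inr (congrArg Subtype.val h)

lemma torusX.eq_torusPt_or_eq_flowPt (x : torusX α) :
    (∃ y, x = torusPt α y) ∨ ∃ t, x = flowPt α t := by
  obtain ⟨z, ⟨y, rfl⟩ | ⟨t, rfl⟩⟩ := x
  exacts [Or.inl ⟨y, rfl⟩, Or.inr ⟨t, rfl⟩]

lemma inr_mem_torusX_iff {p : T2 × ℝ} : Sum.inr p ∈ torusX α ↔ p.1 = torusFlow α p.2 := by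
  simp [torusX, Prod.ext_iff, eq_comm]

end TorusX

lemma zdist_sumMap_add {Y : Type*} [NormedAddCommGroup Y] (R M : ℝ) (v : Y) (s : ℝ)
    (z w : Y ⊕ Y × ℝ) :
    zdist R M (Sum.map (· + v) (· + (v, s)) z) (Sum.map (· + v) (· + (v, s)) w) =
      zdist R M z w := by
  cases z <;> cases w <;> simp [zdist, dist_add_right]

noncomputable def flowEquiv (α s : ℝ) : torusX α ≃ torusX α :=
  (Equiv.sumCongr (Equiv.addRight (torusFlow α s)) (Equiv.addRight (torusFlow α s, s))).subtypeEquiv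
    fun z => by cases z <;> simp [memT, inr_mem_torusX_iff]

@[simp]
lemma flowEquiv_torusPt (α s : ℝ) (y : T2) :
    flowEquiv α s (torusPt α y) = torusPt α (y + torusFlow α s) := rfl

@[simp]
lemma flowEquiv_flowPt (α s t : ℝ) : flowEquiv α s (flowPt α t) = flowPt α (t + s) := by
  simp [flowEquiv, flowPt, Equiv.subtypeEquiv]

lemma flowEquiv_mem_isomOrbit (α R M s : ℝ) (x : torusX α) :
    flowEquiv α s x ∈ isomOrbit α R M x :=
  ⟨flowEquiv α s, (flowEquiv α s).surjective,
    fun p q => zdist_sumMap_add R M (torusFlow α s) s p.1 q.1, rfl⟩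

section Isometries

variable {α R M ε : ℝ}

lemma hasEquilateralTriangle_torusPt (y : T2) (hε₀ : 0 ≤ ε) (hε : ε ≤ 1 / 2) :
    HasEquilateralTriangle (fun p q : torusX α => zdist R M p.1 q.1) ε (torusPt α y) :=
  (hasEquilateralTriangle_torus y hε₀ hε).map fun _ _ => rfl

lemma dist_eq_of_zdist_flowPt_eq {a b : ℝ} (hεM : ε < M) (hεα : ε * max 1 |α| ≤ 1 / 2)
    (h : zdist R M (flowPt α a).1 (flowPt α b).1 = ε) : dist a b = ε / (max 1 |α| + 1) := by
  simp only [zdist, flowPt] at h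
  have hmin : min |a - b| M = |a - b| := by
    rcases min_choice |a - b| M with hmin | hmin
    · exact hmin
    · linarith [dist_nonneg (x := torusFlow α a) (y := torusFlow α b)]
  have hab : |a - b| ≤ ε := by
    linarith [dist_nonneg (x := torusFlow α a) (y := torusFlow α b)]
  rw [hmin, dist_torusFlow_of_small α
    (by nlinarith [le_max_left 1 |α|, abs_nonneg (a - b)])] at h
  rw [Real.dist_eq, eq_div_iff (by positivity)]
  linarith

lemma not_hasEquilateralTriangle_flowPt (t : ℝ) (hε₀ : 0 < ε) (hεR : ε < R) (hεM : ε < M)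
    (hεα : ε * max 1 |α| ≤ 1 / 2) :
    ¬ HasEquilateralTriangle (fun p q : torusX α => zdist R M p.1 q.1) ε (flowPt α t) := by
  rintro ⟨b, c, hb, hc, hbc⟩
  rcases torusX.eq_torusPt_or_eq_flowPt b with ⟨y, rfl⟩ | ⟨u, rfl⟩
  · simp only [zdist, flowPt, torusPt] at hb
    linarith [dist_nonneg (x := torusFlow α t) (y := y)]
  rcases torusX.eq_torusPt_or_eq_flowPt c with ⟨y, rfl⟩ | ⟨v, rfl⟩
  · simp only [zdist, flowPt, torusPt] at hc
    linarith [dist_nonneg (x := torusFlow α t) (y := y)]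
  have := Real.eq_zero_of_hasEquilateralTriangle ⟨u, v,
    dist_eq_of_zdist_flowPt_eq hεM hεα hb, dist_eq_of_zdist_flowPt_eq hεM hεα hc,
    dist_eq_of_zdist_flowPt_eq hεM hεα hbc⟩
  have : 0 < ε / (max 1 |α| + 1) := by positivity
  linarith

lemma exists_hasEquilateralTriangle_iff (hM : 0 < M) (hRM : M ≤ 2 * R) :
    ∃ ε, ∀ x : torusX α,
      HasEquilateralTriangle (fun p q : torusX α => zdist R M p.1 q.1) ε x ↔
        ∃ y, x = torusPt α y := by
  set k := max 1 |α|
  have hk : 1 ≤ k := le_max_left _ _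
  set ε := min (M / 4) (1 / (2 * k))
  have hε₀ : 0 < ε := lt_min (by positivity) (by positivity)
  have hεk : ε * k ≤ 1 / 2 := calc
    ε * k ≤ 1 / (2 * k) * k := by gcongr; exact min_le_right _ _
    _ = 1 / 2 := by field_simp
  have hεM4 : ε ≤ M / 4 := min_le_left _ _
  refine ⟨ε, fun x => ?_⟩
  rcases torusX.eq_torusPt_or_eq_flowPt x with ⟨y, rfl⟩ | ⟨t, rfl⟩
  · exact iff_of_true (hasEquilateralTriangle_torusPt y hε₀.le (by nlinarith)) ⟨y, rfl⟩
  · exact iff_of_false (not_hasEquilateralTriangle_flowPt t hε₀ (by linarith) (by linarith) hεk)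
      fun ⟨y, hy⟩ => torusPt_ne_flowPt y t hy.symm

variable {φ : torusX α → torusX α}

lemma exists_map_torusPt_and_flowPt (hM : 0 < M) (hRM : M ≤ 2 * R) (hsurj : Surjective φ)
    (hiso : ∀ p q : torusX α, zdist R M (φ p).1 (φ q).1 = zdist R M p.1 q.1) :
    (∀ y, ∃ y', φ (torusPt α y) = torusPt α y') ∧ ∀ t, ∃ s, φ (flowPt α t) = flowPt α s := by
  obtain ⟨ε, hε⟩ := exists_hasEquilateralTriangle_iff (α := α) hM hRM
  refine ⟨fun y => (hε _).1 (((hε _).2 ⟨y, rfl⟩).map hiso), fun t => ?_⟩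
  rcases torusX.eq_torusPt_or_eq_flowPt (φ (flowPt α t)) with ⟨y, hy⟩ | hs
  · obtain ⟨y', hy'⟩ := (hε _).1 (.of_map hsurj hiso ((hε _).2 ⟨y, hy⟩))
    exact absurd hy'.symm (torusPt_ne_flowPt _ _)
  · exact hs

lemma exists_map_torusPt_eq (hα : Irrational α) (hM : 0 < M) (hRM : M ≤ 2 * R)
    (hsurj : Surjective φ)
    (hiso : ∀ p q : torusX α, zdist R M (φ p).1 (φ q).1 = zdist R M p.1 q.1) (y₀ : T2) :
    ∃ c, φ (torusPt α y₀) = torusPt α (torusFlow α c + y₀) ∨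
      φ (torusPt α y₀) = torusPt α (torusFlow α c - y₀) := by
  obtain ⟨hT, hH⟩ := exists_map_torusPt_and_flowPt hM hRM hsurj hiso
  choose ψ hψ using hT
  choose σ hσ using hH
  have hψ_iso : Isometry ψ := Isometry.of_dist_eq fun y y' => by
    have := hiso (torusPt α y) (torusPt α y')
    rwa [hψ, hψ] at this
  have hψσ : ∀ t, ψ (torusFlow α t) = torusFlow α (σ t) := fun t => by
    have := hiso (torusPt α (torusFlow α t)) (flowPt α t)
    rw [hψ, hσ] at this
    simpa [zdist, torusPt, flowPt] using this
  have hσ_min : ∀ t s, min |σ t - σ s| M = min |t - s| M := fun t s => by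
    have := hiso (flowPt α t) (flowPt α s)
    rw [hσ, hσ] at this
    simp only [zdist, flowPt] at this
    rw [← hψσ, ← hψσ, hψ_iso.dist_eq] at this
    linarith
  obtain ⟨c, hc | hc⟩ := exists_eq_add_or_eq_sub_of_min_abs_sub_eq hM hσ_min
  · have : ψ = (torusFlow α c + ·) := (denseRange_torusFlow hα).equalizer hψ_iso.continuous
      (continuous_const_add _) (funext fun t => by simp [hψσ, hc])
    exact ⟨c, Or.inl (by rw [hψ, this])⟩
  · have : ψ = (torusFlow α c - ·) := (denseRange_torusFlow hα).equalizer hψ_iso.continuous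
      (continuous_sub_left _) (funext fun t => by simp [hψσ, hc])
    exact ⟨c, Or.inr (by rw [hψ, this])⟩

end Isometries

section Orbits

variable {α R M : ℝ}

lemma isomOrbit_torusPt_dense (hα : Irrational α) (y₀ y : T2) {ε : ℝ} (hε : 0 < ε) :
    ∃ z ∈ isomOrbit α R M (torusPt α y₀), zdist R M z.1 (Sum.inl y) < ε := by
  obtain ⟨t, ht⟩ := Metric.denseRange_iff.1 (denseRange_torusFlow hα) (y - y₀) ε hε
  refine ⟨_, flowEquiv_mem_isomOrbit α R M t _, ?_⟩
  rw [flowEquiv_torusPt]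
  simpa [zdist, torusPt, dist_eq_norm, ← sub_sub, norm_sub_rev, add_comm] using ht

lemma isomOrbit_flowPt_zero (hM : 0 < M) (hRM : M ≤ 2 * R) :
    isomOrbit α R M (flowPt α 0) = {z | ∃ t, z.1 = Sum.inr (torusFlow α t, t)} := by
  ext z
  constructor
  · rintro ⟨φ, hsurj, hiso, rfl⟩
    obtain ⟨s, hs⟩ := (exists_map_torusPt_and_flowPt hM hRM hsurj hiso).2 0
    exact ⟨s, by rw [hs]; rfl⟩
  · rintro ⟨t, ht⟩
    refine ⟨flowEquiv α t, (flowEquiv α t).surjective,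
      fun p q => zdist_sumMap_add R M (torusFlow α t) t p.1 q.1, Subtype.ext ?_⟩
    rw [flowEquiv_flowPt, zero_add, ht]
    rfl

end Orbits

lemma AddSubgroup.exists_sub_notMem_and_add_notMem {A : Type*} [AddCommGroup A]
    (G : AddSubgroup A) {u : A} (hu : u ∉ G) (h2u : 2 • u ∉ G) (y : A) :
    ∃ w, w - y ∉ G ∧ w + y ∉ G := by
  by_cases h : y + u + y ∈ G
  · refine ⟨y + 2 • u, by simpa using h2u, fun h' => hu ?_⟩
    convert G.sub_mem h' h using 1
    abel
  · exact ⟨y + u, by simpa using hu, h⟩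

lemma zero_ratCast_notMem_range_torusFlow {α : ℝ} (hα : Irrational α) {q : ℚ}
    (hq : ((q : ℝ) : AddCircle (1 : ℝ)) ≠ 0) :
    ((0 : AddCircle (1 : ℝ)), ((q : ℝ) : AddCircle (1 : ℝ))) ∉ range (torusFlow α) := by
  rintro ⟨t, ht⟩
  simp only [torusFlow, Prod.mk.injEq] at ht
  obtain ⟨n, rfl⟩ : ∃ n : ℤ, (n : ℝ) = t := by
    simpa using (AddCircle.coe_eq_zero_iff (1 : ℝ)).1 ht.1
  obtain ⟨m, hm⟩ : ∃ m : ℤ, (m : ℝ) = α * n - q := by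
    simpa using (AddCircle.coe_eq_zero_iff (1 : ℝ)).1 (by rw [AddCircle.coe_sub, ht.2, sub_self])
  rcases eq_or_ne n 0 with rfl | hn
  · exact hq (by rw [← ht.2]; simp)
  · exact hα ⟨(m + q) / n, by push_cast; field_simp; linarith⟩

lemma exists_forall_ne_torusFlow_add_and_sub {α : ℝ} (hα : Irrational α) (y₀ : T2) :
    ∃ w : T2, ∀ c, w ≠ torusFlow α c + y₀ ∧ w ≠ torusFlow α c - y₀ := by
  have hne : ∀ x : ℝ, 0 < x → x ≤ 1 / 2 → (x : AddCircle (1 : ℝ)) ≠ 0 := fun x hx₀ hx h => by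
    have := AddCircle.norm_coe_one_of_abs_le (x := x) (by rwa [abs_of_pos hx₀])
    rw [h, norm_zero, abs_of_pos hx₀] at this
    linarith
  let u : T2 := (0, (((1 / 4 : ℚ) : ℝ) : AddCircle (1 : ℝ)))
  have h2u : 2 • u = (0, (((1 / 2 : ℚ) : ℝ) : AddCircle (1 : ℝ))) := by
    ext
    · simp [u]
    · rw [Prod.smul_snd, ← AddCircle.coe_nsmul]
      norm_num
  obtain ⟨w, hw₁, hw₂⟩ := (torusFlowHom α).range.exists_sub_notMem_and_add_notMem
    (zero_ratCast_notMem_range_torusFlow hα (hne _ (by norm_num) (by norm_num)))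
    (h2u ▸ zero_ratCast_notMem_range_torusFlow hα (hne _ (by norm_num) (by norm_num))) y₀
  refine ⟨w, fun c => ⟨fun h => hw₁ ⟨c, ?_⟩, fun h => hw₂ ⟨c, ?_⟩⟩⟩
  · rw [h, add_sub_cancel_right]; rfl
  · rw [h, sub_add_cancel]; rfl

/-- in the torus example `X = 𝕋 ∪ H`, for every `y₀ ∈ 𝕋` the orbit
of `y₀` under the group of surjective isometries of `(X, d)` is dense in `𝕋` but
not closed in `X`; moreover `H` is a single orbit of the isometry group. -/
theorem torus_orbits (α : ℝ) (hα : Irrational α)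
    (R M : ℝ) (hM : 0 < M) (hRM : M ≤ 2 * R) (y₀ : T2) :
    -- the orbit of `y₀` is dense in `𝕋`:
    (∀ y : T2, ∀ ε > (0 : ℝ), ∃ z ∈ isomOrbit α R M ⟨Sum.inl y₀, memT α y₀⟩,
      zdist R M z.1 (Sum.inl y) < ε) ∧
    -- the orbit of `y₀` is not closed in `X`:
    (∃ x : torusX α, x ∉ isomOrbit α R M ⟨Sum.inl y₀, memT α y₀⟩ ∧
      ∀ ε > (0 : ℝ), ∃ z ∈ isomOrbit α R M ⟨Sum.inl y₀, memT α y₀⟩,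
        zdist R M z.1 x.1 < ε) ∧
    -- `H` is a single orbit:
    isomOrbit α R M ⟨Sum.inr (torusFlow α 0, 0), memH α 0⟩ =
      {z : torusX α | ∃ t : ℝ, z.1 = Sum.inr (torusFlow α t, t)} := by
  refine ⟨fun y _ => isomOrbit_torusPt_dense hα y₀ y, ?_, isomOrbit_flowPt_zero hM hRM⟩
  obtain ⟨w, hw⟩ := exists_forall_ne_torusFlow_add_and_sub hα y₀
  refine ⟨torusPt α w, ?_, fun _ => isomOrbit_torusPt_dense hα y₀ w⟩
  rintro ⟨φ, hsurj, hiso, hφ⟩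
  obtain ⟨c, hc | hc⟩ := exists_map_torusPt_eq hα hM hRM hsurj hiso y₀
  · exact (hw c).1 (torusPt_injective (hφ.symm.trans hc))
  · exact (hw c).2 (torusPt_injective (hφ.symm.trans hc))
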